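/- (Uniqueness of the recessive solution.) Let ν ∈ ℝ and let Z̃ and Z̃′ be two recessive solutions of system (S_ν). Then there exists an invertible matrix K ∈ ℂ^{n×n} such that Z̃′ₖ = Z̃ₖ K for all k ∈ ℕ; i.e., the recessive solution of (S_ν) is determined uniquely up to a right multiple by a constant nonsingular n×n matrix. -/

import Mathlib

open Matrix Filter
open scoped ComplexOrder

noncomputable def Jmat (n : ℕ) : Matrix (Fin n ⊕ Fin n) (Fin n ⊕ Fin n) ℂ :=
  Matrix.fromBlocks 0 1 (-1) 0

noncomputable def PsiMat {n : ℕ} (W : ℕ → Matrix (Fin n) (Fin n) ℂ) (k : ℕ) :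
    Matrix (Fin n ⊕ Fin n) (Fin n ⊕ Fin n) ℂ :=
  Matrix.fromBlocks (W k) 0 0 0

noncomputable def Vmat {n : ℕ} (S : ℕ → Matrix (Fin n ⊕ Fin n) (Fin n ⊕ Fin n) ℂ)
    (W : ℕ → Matrix (Fin n) (Fin n) ℂ) (k : ℕ) :
    Matrix (Fin n ⊕ Fin n) (Fin n ⊕ Fin n) ℂ :=
  -(Jmat n * PsiMat W k * S k)

/-- `Z` is a conjoined basis of system `(S_ν)`: a `2n×n` matrix solution with
`rank Zₖ = n` and `Zₖ* 𝒥 Zₖ = 0` for all `k`. -/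
def IsConjoinedBasis {n : ℕ} (S : ℕ → Matrix (Fin n ⊕ Fin n) (Fin n ⊕ Fin n) ℂ)
    (W : ℕ → Matrix (Fin n) (Fin n) ℂ) (nu : ℝ)
    (Z : ℕ → Matrix (Fin n ⊕ Fin n) (Fin n) ℂ) : Prop :=
  (∀ k, Z k = (S k + (nu : ℂ) • Vmat S W k) * Z (k + 1)) ∧
    ∀ k, (Z k).rank = n ∧ (Z k)ᴴ * Jmat n * Z k = 0

/-- `Z̃ = (X̃; Ũ)` is a recessive solution of `(S_ν)`: a conjoined basis such that for all
sufficiently large `k` the matrix `X̃ₖ` is invertible with `−X̃ₖ⁻¹ ℬₖ (X̃_{k+1}*)⁻¹ ≥ 0`,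
and for every conjoined basis `Z = (X; U)` normalized with `Z̃` (i.e. `Zₖ* 𝒥 Z̃ₖ = I`),
the matrix `Xₖ` is invertible for all large `k` and `Xₖ⁻¹ X̃ₖ → 0` as `k → ∞`. -/
def IsRecessive {n : ℕ} (S : ℕ → Matrix (Fin n ⊕ Fin n) (Fin n ⊕ Fin n) ℂ)
    (W B : ℕ → Matrix (Fin n) (Fin n) ℂ) (nu : ℝ)
    (Xt Ut : ℕ → Matrix (Fin n) (Fin n) ℂ) : Prop :=
  IsConjoinedBasis S W nu (fun k => Matrix.fromRows (Xt k) (Ut k)) ∧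
    (∃ k₀ : ℕ, ∀ k, k₀ ≤ k →
      IsUnit (Xt k) ∧ (-((Xt k)⁻¹ * B k * ((Xt (k + 1))ᴴ)⁻¹)).PosSemidef) ∧
    ∀ X U : ℕ → Matrix (Fin n) (Fin n) ℂ,
      IsConjoinedBasis S W nu (fun k => Matrix.fromRows (X k) (U k)) →
      (∀ k, (Matrix.fromRows (X k) (U k))ᴴ * Jmat n * Matrix.fromRows (Xt k) (Ut k) = 1) →
      (∃ k₁ : ℕ, ∀ k, k₁ ≤ k → IsUnit (X k)) ∧
        Filter.Tendsto (fun k => (X k)⁻¹ * Xt k) Filter.atTop (nhds 0)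

/-- The system is eventually controllable: there is `N` such that on any finite subinterval
`{K,…,M}` of `[N,∞)` the only `u` with `0 = ℬₖ u_{k+1}` and `uₖ = 𝒟ₖ u_{k+1}` for all
`k ∈ {K,…,M−1}` is the trivial one. -/
def EventuallyControllable {n : ℕ} (B D : ℕ → Matrix (Fin n) (Fin n) ℂ) : Prop :=
  ∃ N : ℕ, ∀ K M : ℕ, N ≤ K → K < M →
    ∀ u : ℕ → Fin n → ℂ,
      (∀ k, K ≤ k → k < M → B k *ᵥ u (k + 1) = 0 ∧ u k = D k *ᵥ u (k + 1)) →
      ∀ k, K ≤ k → k ≤ M → u k = 0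

/-- The strong Atkinson (definiteness) condition: there are `λ₀ ∈ ℂ` and `a ≤ b` in `ℕ`
such that every solution `z` of `(S_{λ₀})` with `Σ_{k=a}^{b} zₖ*Ψₖzₖ = 0` vanishes
identically. -/
def StrongAtkinson {n : ℕ} (S : ℕ → Matrix (Fin n ⊕ Fin n) (Fin n ⊕ Fin n) ℂ)
    (W : ℕ → Matrix (Fin n) (Fin n) ℂ) : Prop :=
  ∃ (lam0 : ℂ) (a b : ℕ), a ≤ b ∧
    ∀ z : ℕ → (Fin n ⊕ Fin n) → ℂ,
      (∀ k, z k = (S k + lam0 • Vmat S W k) *ᵥ z (k + 1)) →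
      (∑ k ∈ Finset.Icc a b, star (z k) ⬝ᵥ (PsiMat W k *ᵥ z k)) = 0 →
      ∀ k, z k = 0

/-!
The propagator `Mₖ = 𝒮ₖ + ν𝒱ₖ = (I - ν𝒥Ψₖ) 𝒮ₖ` is symplectic (`Ψ𝒥Ψ = 0`), so the Wronskian
`Yₖ* 𝒥 Y'ₖ` of two solutions is constant. A conjoined basis `Z` normalized against `Z̃` makes
`[Z Z̃]` symplectic, and every solution expands in it with constant coefficients; in particular
`Z̃' = Z̃ N - Z L`. On the top blocks, `X⁻¹X̃' = X⁻¹X̃ N - L → -L`, while also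
`X⁻¹X̃' = (X⁻¹X')(X'⁻¹X̃') → 0` for the conjoined basis `Z'` normalized against `Z̃'`, because
`X⁻¹X'` converges as well. Hence `L = 0`, and `N` is invertible since `Z̃'` has rank `n`.
-/

open scoped Topology

theorem Matrix.isUnit_of_rank_eq_card {K m : Type*} [Field K] [Fintype m] [DecidableEq m]
    {A : Matrix m m K} (h : A.rank = Fintype.card m) : IsUnit A := by
  rw [← Matrix.mulVec_surjective_iff_isUnit]
  have hrange : LinearMap.range A.mulVecLin = ⊤ :=
    Submodule.eq_top_of_finrank_eq (by rw [← Matrix.rank, h, Module.finrank_fintype_fun_eq_card])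
  intro v
  obtain ⟨u, hu⟩ := LinearMap.range_eq_top.mp hrange v
  exact ⟨u, hu⟩

theorem Matrix.toRows₁_mul_sub_mul {R m₁ m₂ l p : Type*} [Ring R] [Fintype l]
    (A B : Matrix (m₁ ⊕ m₂) l R) (N L : Matrix l p R) :
    (A * N - B * L).toRows₁ = A.toRows₁ * N - B.toRows₁ * L := by
  ext i j
  simp [Matrix.mul_apply]

theorem exists_solution_eq {K ι m : Type*} [Field K] [Fintype ι] [DecidableEq ι]
    {M : ℕ → Matrix ι ι K} (hM : ∀ k, IsUnit (M k)) (Y₀ : Matrix ι m K) :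
    ∃ Y : ℕ → Matrix ι m K, Y 0 = Y₀ ∧ ∀ k, Y k = M k * Y (k + 1) :=
  ⟨fun k => Nat.rec Y₀ (fun k Yk => (M k)⁻¹ * Yk) k, rfl, fun k =>
    (Matrix.mul_nonsing_inv_cancel_left _ _ ((Matrix.isUnit_iff_isUnit_det _).mp (hM k))).symm⟩

theorem eq_zero_of_tendsto_inv_mul {K m : Type*} [Field K] [TopologicalSpace K]
    [IsTopologicalRing K] [T2Space K] [Fintype m] [DecidableEq m]
    {X X' Y Y' : ℕ → Matrix m m K} {N L N' L' : Matrix m m K}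
    (hY' : ∀ k, Y' k = Y k * N - X k * L) (hX' : ∀ k, X' k = Y k * N' - X k * L')
    (hX : ∀ᶠ k in atTop, IsUnit (X k)) (hX'unit : ∀ᶠ k in atTop, IsUnit (X' k))
    (hlim : Tendsto (fun k => (X k)⁻¹ * Y k) atTop (𝓝 0))
    (hlim' : Tendsto (fun k => (X' k)⁻¹ * Y' k) atTop (𝓝 0)) : L = 0 := by
  have inv_mul_expansion : ∀ k, IsUnit (X k) → ∀ N L : Matrix m m K,
      (X k)⁻¹ * (Y k * N - X k * L) = (X k)⁻¹ * Y k * N - L := fun k hk N L => by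
    rw [Matrix.mul_sub, ← Matrix.mul_assoc, ← Matrix.mul_assoc,
      Matrix.nonsing_inv_mul _ ((Matrix.isUnit_iff_isUnit_det _).mp hk), Matrix.one_mul]
  -- `X⁻¹ Y'` tends to `-L`, and also factors as `(X⁻¹ X') (X'⁻¹ Y')`, which tends to `0`.
  have hfactor : (fun k => (X k)⁻¹ * Y k * N - L) =ᶠ[atTop]
      fun k => ((X k)⁻¹ * Y k * N' - L') * ((X' k)⁻¹ * Y' k) := by
    filter_upwards [hX, hX'unit] with k hk hk'
    rw [← inv_mul_expansion k hk, ← inv_mul_expansion k hk, ← hY', ← hX', Matrix.mul_assoc,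
      Matrix.mul_nonsing_inv_cancel_left _ _ ((Matrix.isUnit_iff_isUnit_det _).mp hk')]
  have h₁ := (hlim.mul_const N).sub_const L
  have h₂ := ((hlim.mul_const N').sub_const L').mul hlim'
  simpa using tendsto_nhds_unique h₁ (h₂.congr' hfactor.symm)

section Symplectic

variable {n : ℕ}

theorem Jmat_mul_Jmat : Jmat n * Jmat n = -1 := by
  rw [← Matrix.fromBlocks_one, Matrix.fromBlocks_neg]
  simp [Jmat, Matrix.fromBlocks_multiply]

theorem Jmat_mul_Jmat_mul {m : Type*} (X : Matrix (Fin n ⊕ Fin n) m ℂ) :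
    Jmat n * (Jmat n * X) = -X := by
  rw [← Matrix.mul_assoc, Jmat_mul_Jmat, Matrix.neg_mul, Matrix.one_mul]

theorem conjTranspose_Jmat : (Jmat n)ᴴ = -Jmat n := by
  rw [Jmat, Matrix.fromBlocks_conjTranspose, Matrix.fromBlocks_neg]
  simp

theorem conjTranspose_PsiMat {W : ℕ → Matrix (Fin n) (Fin n) ℂ} {k : ℕ} (hW : (W k).IsHermitian) :
    (PsiMat W k)ᴴ = PsiMat W k := by
  simp [PsiMat, Matrix.fromBlocks_conjTranspose, hW.eq]

theorem PsiMat_mul_Jmat_mul_PsiMat (W : ℕ → Matrix (Fin n) (Fin n) ℂ) (k : ℕ) :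
    PsiMat W k * Jmat n * PsiMat W k = 0 := by
  simp [PsiMat, Jmat, Matrix.fromBlocks_multiply]

def IsSymplectic (M : Matrix (Fin n ⊕ Fin n) (Fin n ⊕ Fin n) ℂ) : Prop :=
  Mᴴ * Jmat n * M = Jmat n

namespace IsSymplectic

variable {M N : Matrix (Fin n ⊕ Fin n) (Fin n ⊕ Fin n) ℂ}

theorem mul (hM : IsSymplectic M) (hN : IsSymplectic N) : IsSymplectic (M * N) := by
  unfold IsSymplectic at *
  rw [Matrix.conjTranspose_mul]
  calc Nᴴ * Mᴴ * Jmat n * (M * N) = Nᴴ * (Mᴴ * Jmat n * M) * N := by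
        simp only [Matrix.mul_assoc]
    _ = Jmat n := by rw [hM, hN]

theorem mul_neg_Jmat_mul_conjTranspose_mul_Jmat (hM : IsSymplectic M) :
    M * (-Jmat n * Mᴴ * Jmat n) = 1 := by
  refine mul_eq_one_comm.mp ?_
  calc -Jmat n * Mᴴ * Jmat n * M = -(Jmat n * (Mᴴ * Jmat n * M)) := by
        simp only [Matrix.neg_mul, Matrix.mul_assoc]
    _ = 1 := by rw [hM, Jmat_mul_Jmat, neg_neg]

theorem isUnit (hM : IsSymplectic M) : IsUnit M :=
  (Matrix.isUnit_iff_isUnit_det _).mpr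
    (Matrix.isUnit_det_of_right_inverse hM.mul_neg_Jmat_mul_conjTranspose_mul_Jmat)

end IsSymplectic

theorem isSymplectic_one_sub_smul_Jmat_mul {P : Matrix (Fin n ⊕ Fin n) (Fin n ⊕ Fin n) ℂ}
    (hP : Pᴴ = P) (hPJP : P * Jmat n * P = 0) (t : ℝ) :
    IsSymplectic (1 - (t : ℂ) • (Jmat n * P)) := by
  have hconj : (1 - (t : ℂ) • (Jmat n * P))ᴴ = 1 + (t : ℂ) • (P * Jmat n) := by
    simp [Matrix.conjTranspose_mul, hP, conjTranspose_Jmat, sub_eq_add_neg]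
  rw [Matrix.mul_assoc] at hPJP
  unfold IsSymplectic
  rw [hconj]
  simp [Matrix.add_mul, Matrix.mul_sub, Matrix.mul_assoc, Jmat_mul_Jmat, Jmat_mul_Jmat_mul, hPJP]

theorem isSymplectic_add_smul_Vmat {S : ℕ → Matrix (Fin n ⊕ Fin n) (Fin n ⊕ Fin n) ℂ}
    {W : ℕ → Matrix (Fin n) (Fin n) ℂ} {k : ℕ} (hS : IsSymplectic (S k)) (hW : (W k).IsHermitian)
    (ν : ℝ) : IsSymplectic (S k + (ν : ℂ) • Vmat S W k) := by
  have hfactor : S k + (ν : ℂ) • Vmat S W k = (1 - (ν : ℂ) • (Jmat n * PsiMat W k)) * S k := by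
    rw [Vmat, Matrix.sub_mul, Matrix.one_mul, Matrix.smul_mul, smul_neg, sub_eq_add_neg]
  rw [hfactor]
  exact (isSymplectic_one_sub_smul_Jmat_mul (conjTranspose_PsiMat hW)
    (PsiMat_mul_Jmat_mul_PsiMat W k) ν).mul hS

end Symplectic

section Solutions

variable {n : ℕ} {M : ℕ → Matrix (Fin n ⊕ Fin n) (Fin n ⊕ Fin n) ℂ}

theorem wronskian_eq_of_solutions {m m' : Type*} (hM : ∀ k, IsSymplectic (M k))
    {Y : ℕ → Matrix (Fin n ⊕ Fin n) m ℂ} {Y' : ℕ → Matrix (Fin n ⊕ Fin n) m' ℂ}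
    (hY : ∀ k, Y k = M k * Y (k + 1)) (hY' : ∀ k, Y' k = M k * Y' (k + 1)) (k : ℕ) :
    (Y k)ᴴ * Jmat n * Y' k = (Y 0)ᴴ * Jmat n * Y' 0 := by
  induction k with
  | zero => rfl
  | succ k ih =>
    rw [← ih, hY k, hY' k, Matrix.conjTranspose_mul]
    calc (Y (k + 1))ᴴ * Jmat n * Y' (k + 1)
        = (Y (k + 1))ᴴ * ((M k)ᴴ * Jmat n * M k) * Y' (k + 1) := by rw [hM k]
      _ = (Y (k + 1))ᴴ * (M k)ᴴ * Jmat n * (M k * Y' (k + 1)) := by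
        simp only [Matrix.mul_assoc]

theorem rank_eq_of_conjTranspose_mul_Jmat_mul_eq_one {Z Z' : Matrix (Fin n ⊕ Fin n) (Fin n) ℂ}
    (h : Zᴴ * Jmat n * Z' = 1) : Z.rank = n := by
  refine le_antisymm (by simpa using Z.rank_le_card_width) ?_
  calc n = (1 : Matrix (Fin n) (Fin n) ℂ).rank := by simp [Matrix.rank_one]
    _ = (Zᴴ * (Jmat n * Z')).rank := by rw [← Matrix.mul_assoc, h]
    _ ≤ Zᴴ.rank := Matrix.rank_mul_le_left _ _
    _ = Z.rank := Z.rank_conjTranspose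

theorem exists_conjTranspose_mul_Jmat_mul_eq_one {Z' : Matrix (Fin n ⊕ Fin n) (Fin n) ℂ}
    (hrank : Z'.rank = n) (hZ' : Z'ᴴ * Jmat n * Z' = 0) :
    ∃ Z : Matrix (Fin n ⊕ Fin n) (Fin n) ℂ, Zᴴ * Jmat n * Z = 0 ∧ Zᴴ * Jmat n * Z' = 1 := by
  set G := Z'ᴴ * Z'
  have hG : IsUnit G.det := (Matrix.isUnit_iff_isUnit_det _).mp <|
    Matrix.isUnit_of_rank_eq_card (by rw [Matrix.rank_conjTranspose_mul_self, hrank,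
      Fintype.card_fin])
  have hGinv : (G⁻¹)ᴴ = G⁻¹ := by
    rw [Matrix.conjTranspose_nonsing_inv, Matrix.conjTranspose_mul,
      Matrix.conjTranspose_conjTranspose]
  have hZH : (Jmat n * Z' * G⁻¹)ᴴ * Jmat n = G⁻¹ * Z'ᴴ := by
    rw [Matrix.conjTranspose_mul, Matrix.conjTranspose_mul, hGinv, conjTranspose_Jmat,
      Matrix.mul_assoc, Matrix.mul_assoc, Matrix.neg_mul, Jmat_mul_Jmat, neg_neg, Matrix.mul_one]
  refine ⟨Jmat n * Z' * G⁻¹, ?_, ?_⟩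
  · rw [hZH]
    calc G⁻¹ * Z'ᴴ * (Jmat n * Z' * G⁻¹) = G⁻¹ * (Z'ᴴ * Jmat n * Z') * G⁻¹ := by
          simp only [Matrix.mul_assoc]
      _ = 0 := by rw [hZ', Matrix.mul_zero, Matrix.zero_mul]
  · rw [hZH, Matrix.mul_assoc, Matrix.nonsing_inv_mul _ hG]

theorem exists_normalized_lagrangian_solution (hM : ∀ k, IsSymplectic (M k))
    {Z' : ℕ → Matrix (Fin n ⊕ Fin n) (Fin n) ℂ} (hZ' : ∀ k, Z' k = M k * Z' (k + 1))
    (hrank : (Z' 0).rank = n) (hlag : (Z' 0)ᴴ * Jmat n * Z' 0 = 0) :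
    ∃ Z : ℕ → Matrix (Fin n ⊕ Fin n) (Fin n) ℂ, (∀ k, Z k = M k * Z (k + 1)) ∧
      (∀ k, (Z k)ᴴ * Jmat n * Z k = 0) ∧ ∀ k, (Z k)ᴴ * Jmat n * Z' k = 1 := by
  obtain ⟨Z₀, hlag₀, hnorm₀⟩ := exists_conjTranspose_mul_Jmat_mul_eq_one hrank hlag
  obtain ⟨Z, rfl, hZ⟩ := exists_solution_eq (fun k => (hM k).isUnit) Z₀
  exact ⟨Z, hZ, fun k => by rw [wronskian_eq_of_solutions hM hZ hZ, hlag₀],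
    fun k => by rw [wronskian_eq_of_solutions hM hZ hZ', hnorm₀]⟩

theorem mul_conjTranspose_Jmat_sub_eq_one {Z Z' : Matrix (Fin n ⊕ Fin n) (Fin n) ℂ}
    (hZ : Zᴴ * Jmat n * Z = 0) (hnorm : Zᴴ * Jmat n * Z' = 1) (hZ' : Z'ᴴ * Jmat n * Z' = 0) :
    Z' * (Zᴴ * Jmat n) - Z * (Z'ᴴ * Jmat n) = 1 := by
  have hnorm' : Z'ᴴ * Jmat n * Z = -1 := by
    have h := congrArg Matrix.conjTranspose hnorm
    simp only [Matrix.conjTranspose_mul, Matrix.conjTranspose_conjTranspose, conjTranspose_Jmat,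
      Matrix.conjTranspose_one, Matrix.neg_mul, Matrix.mul_neg] at h
    rw [Matrix.mul_assoc, ← h, neg_neg]
  -- `[Z Z']` is symplectic, so `-J [Z Z']ᴴ J` is its right inverse.
  have hΦ : IsSymplectic (Matrix.fromCols Z Z') := by
    rw [IsSymplectic, Matrix.conjTranspose_fromCols_eq_fromRows_conjTranspose, Matrix.fromRows_mul,
      Matrix.fromRows_mul_fromCols, hZ, hnorm, hnorm', hZ', Jmat]
  have hJ : -Jmat n = Matrix.fromBlocks 0 (-1) 1 0 := by
    rw [Jmat, Matrix.fromBlocks_neg]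
    simp
  have := hΦ.mul_neg_Jmat_mul_conjTranspose_mul_Jmat
  rw [← Matrix.mul_assoc, ← Matrix.mul_assoc, hJ,
    Matrix.fromCols_mul_fromBlocks, Matrix.conjTranspose_fromCols_eq_fromRows_conjTranspose,
    Matrix.fromCols_mul_fromRows] at this
  simpa [Matrix.add_mul, Matrix.mul_assoc, sub_eq_add_neg] using this

theorem eq_expansion_of_normalized (hM : ∀ k, IsSymplectic (M k))
    {Z Z' : ℕ → Matrix (Fin n ⊕ Fin n) (Fin n) ℂ}
    (hZ : ∀ k, Z k = M k * Z (k + 1)) (hZ' : ∀ k, Z' k = M k * Z' (k + 1))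
    (hlag : ∀ k, (Z k)ᴴ * Jmat n * Z k = 0) (hnorm : ∀ k, (Z k)ᴴ * Jmat n * Z' k = 1)
    (hlag' : ∀ k, (Z' k)ᴴ * Jmat n * Z' k = 0) {m : Type*} {Y : ℕ → Matrix (Fin n ⊕ Fin n) m ℂ}
    (hY : ∀ k, Y k = M k * Y (k + 1)) (k : ℕ) :
    Y k = Z' k * ((Z 0)ᴴ * Jmat n * Y 0) - Z k * ((Z' 0)ᴴ * Jmat n * Y 0) := by
  rw [← wronskian_eq_of_solutions hM hZ hY k, ← wronskian_eq_of_solutions hM hZ' hY k]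
  calc Y k = (Z' k * ((Z k)ᴴ * Jmat n) - Z k * ((Z' k)ᴴ * Jmat n)) * Y k := by
        rw [mul_conjTranspose_Jmat_sub_eq_one (hlag k) (hnorm k) (hlag' k), Matrix.one_mul]
    _ = _ := by simp only [Matrix.sub_mul, Matrix.mul_assoc]

end Solutions

theorem IsRecessive.exists_normalized_conjoinedBasis {n : ℕ}
    {S : ℕ → Matrix (Fin n ⊕ Fin n) (Fin n ⊕ Fin n) ℂ} {W B Xt Ut : ℕ → Matrix (Fin n) (Fin n) ℂ}
    {nu : ℝ} (hrec : IsRecessive S W B nu Xt Ut)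
    (hM : ∀ k, IsSymplectic (S k + (nu : ℂ) • Vmat S W k)) :
    ∃ Z : ℕ → Matrix (Fin n ⊕ Fin n) (Fin n) ℂ,
      (∀ k, Z k = (S k + (nu : ℂ) • Vmat S W k) * Z (k + 1)) ∧
      (∀ k, (Z k)ᴴ * Jmat n * Z k = 0) ∧
      (∀ k, (Z k)ᴴ * Jmat n * fromRows (Xt k) (Ut k) = 1) ∧
      (∀ᶠ k in atTop, IsUnit (Z k).toRows₁) ∧
      Tendsto (fun k => ((Z k).toRows₁)⁻¹ * Xt k) atTop (𝓝 0) := by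
  obtain ⟨⟨hsol, hbasis⟩, -, hlim⟩ := hrec
  obtain ⟨Z, hZ, hlag, hnorm⟩ :=
    exists_normalized_lagrangian_solution hM hsol (hbasis 0).1 (hbasis 0).2
  obtain ⟨⟨k₁, hunit⟩, htendsto⟩ := hlim (fun k => (Z k).toRows₁) (fun k => (Z k).toRows₂)
    ⟨fun k => by simpa only [fromRows_toRows] using hZ k, fun k => by
      simpa only [fromRows_toRows] using
        ⟨rank_eq_of_conjTranspose_mul_Jmat_mul_eq_one (hnorm k), hlag k⟩⟩
    (fun k => by simpa only [fromRows_toRows] using hnorm k)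
  exact ⟨Z, hZ, hlag, hnorm, eventually_atTop.mpr ⟨k₁, hunit⟩, htendsto⟩

theorem statement19_general {n : ℕ}
    (S : ℕ → Matrix (Fin n ⊕ Fin n) (Fin n ⊕ Fin n) ℂ)
    (B W : ℕ → Matrix (Fin n) (Fin n) ℂ)
    (hS : ∀ k, (S k)ᴴ * Jmat n * S k = Jmat n)
    (hW : ∀ k, (W k).PosDef)
    (nu : ℝ) (Xt Ut Xt' Ut' : ℕ → Matrix (Fin n) (Fin n) ℂ)
    (hrec : IsRecessive S W B nu Xt Ut)
    (hrec' : IsRecessive S W B nu Xt' Ut') :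
    ∃ K : Matrix (Fin n) (Fin n) ℂ, IsUnit K ∧
      ∀ k, Matrix.fromRows (Xt' k) (Ut' k) = Matrix.fromRows (Xt k) (Ut k) * K := by
  have hM : ∀ k, IsSymplectic (S k + (nu : ℂ) • Vmat S W k) :=
    fun k => isSymplectic_add_smul_Vmat (hS k) (hW k).isHermitian nu
  obtain ⟨Z, hZ, hlag, hnorm, hunit, hlim⟩ := hrec.exists_normalized_conjoinedBasis hM
  obtain ⟨Z', hZ', -, -, hunit', hlim'⟩ := hrec'.exists_normalized_conjoinedBasis hM
  have hlag' k := (hrec.1.2 k).2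
  have hexpand k := eq_expansion_of_normalized hM hZ hrec.1.1 hlag hnorm hlag' hrec'.1.1 k
  have hL := eq_zero_of_tendsto_inv_mul
    (fun k => by
      rw [← toRows₁_fromRows (Xt' k) (Ut' k), hexpand k, toRows₁_mul_sub_mul, toRows₁_fromRows])
    (fun k => by
      rw [eq_expansion_of_normalized hM hZ hrec.1.1 hlag hnorm hlag' hZ' k, toRows₁_mul_sub_mul,
        toRows₁_fromRows])
    hunit hunit' hlim hlim'
  simp only [hL, Matrix.mul_zero, sub_zero] at hexpand
  obtain ⟨K, hK⟩ : ∃ K, ∀ k, fromRows (Xt' k) (Ut' k) = fromRows (Xt k) (Ut k) * K := ⟨_, hexpand⟩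
  refine ⟨K, Matrix.isUnit_of_rank_eq_card (le_antisymm K.rank_le_card_width ?_), hK⟩
  calc Fintype.card (Fin n) = (fromRows (Xt' 0) (Ut' 0)).rank := by
        rw [(hrec'.1.2 0).1, Fintype.card_fin]
    _ ≤ K.rank := by rw [hK 0]; exact Matrix.rank_mul_le_right _ _

/-- Uniqueness of the recessive solution: any two recessive solutions of
`(S_ν)` differ by a constant nonsingular right factor. -/
theorem statement19 {n : ℕ} (hn : 1 ≤ n)
    (S : ℕ → Matrix (Fin n ⊕ Fin n) (Fin n ⊕ Fin n) ℂ)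
    (A B C D W : ℕ → Matrix (Fin n) (Fin n) ℂ)
    (hS : ∀ k, (S k)ᴴ * Jmat n * S k = Jmat n)
    (hblocks : ∀ k, S k = Matrix.fromBlocks (A k) (B k) (C k) (D k))
    (hW : ∀ k, (W k).PosDef)
    (nu : ℝ) (Xt Ut Xt' Ut' : ℕ → Matrix (Fin n) (Fin n) ℂ)
    (hrec : IsRecessive S W B nu Xt Ut)
    (hrec' : IsRecessive S W B nu Xt' Ut') :
    ∃ K : Matrix (Fin n) (Fin n) ℂ, IsUnit K ∧
      ∀ k, Matrix.fromRows (Xt' k) (Ut' k) = Matrix.fromRows (Xt k) (Ut k) * K :=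
  statement19_general S B W hS hW nu Xt Ut Xt' Ut' hrec hrec'
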